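/- arXiv:1708.00821 — 2 statements merged into one kernel-verified Lean document; each statement's English description precedes it below -/
import Mathlib

section
/- Let n ≥ 1, s ∈ (0,1), u₀ ∈ L¹(ℝⁿ) with total mass M = ∫_{ℝⁿ} u₀(x) dx, and let u(x,t) = ∫_{ℝⁿ} P(x−y,t;s) u₀(y) dy be the solution of the fractional heat equation with initial datum u₀. Then t^{n/(2s)} ‖u(·,t) − M·P(·,t;s)‖_{L^∞(ℝⁿ)} → 0 as t → ∞. -/
open MeasureTheory Real Filter

/-- The fractional heat kernel `P(x,t;s)` on `ℝⁿ`: the inverse Fourier transform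
in space of `ξ ↦ exp(-t |ξ|^(2s))`. -/
noncomputable def fracP (n : ℕ) (s : ℝ) (x : EuclideanSpace ℝ (Fin n)) (t : ℝ) : ℝ :=
  ((2 * π) ^ n)⁻¹ * (∫ ξ : EuclideanSpace ℝ (Fin n),
    Complex.exp (Complex.I * ((inner ℝ x ξ : ℝ) : ℂ)) *
      Complex.exp (-(t : ℂ) * ((‖ξ‖ ^ (2 * s) : ℝ) : ℂ))).re

/-- The solution of the fractional heat equation with initial datum `u₀`:
`u(x,t) = ∫ P(x-y,t;s) u₀(y) dy`. -/
noncomputable def fracSol (n : ℕ) (s : ℝ) (u₀ : EuclideanSpace ℝ (Fin n) → ℝ)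
    (x : EuclideanSpace ℝ (Fin n)) (t : ℝ) : ℝ :=
  ∫ y, fracP n s (x - y) t * u₀ y

open Topology

/-! The kernel is self-similar, `t ^ (n / (2s)) * P(x, t) = P(t ^ (-1 / (2s)) • x, 1)`, and
`P(·, 1)` is bounded by some `C` and `L`-Lipschitz, because `|e^{ix·ξ} - e^{iy·ξ}| ≤ |x - y| |ξ|`
and `|ξ| e^{-|ξ|^{2s}}` is integrable. Since
`u(x, t) - M P(x, t) = ∫ (P(x - y, t) - P(x, t)) u₀(y) dy`, this gives
`t ^ (n / (2s)) ‖u(·, t) - M P(·, t)‖_∞ ≤ ∫ min (L t ^ (-1 / (2s)) |y|, 2C) |u₀(y)| dy`,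
which tends to `0` by dominated convergence. -/

theorem abs_sub_le_min_of_lipschitzWith {X : Type*} [PseudoMetricSpace X] {g : X → ℝ}
    {K : NNReal} {C : ℝ} (hg : LipschitzWith K g) (hC : ∀ x, |g x| ≤ C) (a b : X) :
    |g a - g b| ≤ min (K * dist a b) (2 * C) := by
  refine le_min ?_ ?_
  · rw [← Real.dist_eq]
    exact hg.dist_le_mul a b
  · linarith [abs_sub (g a) (g b), hC a, hC b]

theorem norm_cexp_I_mul_sub_cexp_I_mul_le (a b : ℝ) :
    ‖Complex.exp (Complex.I * a) - Complex.exp (Complex.I * b)‖ ≤ |a - b| := by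
  have h : Complex.exp (Complex.I * a) - Complex.exp (Complex.I * b) =
      Complex.exp (Complex.I * b) * (Complex.exp (Complex.I * ↑(a - b)) - 1) := by
    rw [mul_sub, ← Complex.exp_add]
    push_cast
    ring_nf
  rw [h, norm_mul, Complex.norm_exp_I_mul_ofReal, one_mul]
  exact norm_exp_I_mul_ofReal_sub_one_le

theorem ofReal_mul_eLpNorm_top_le {α : Type*} [MeasurableSpace α] {μ : Measure α} {f : α → ℝ}
    {c b : ℝ} (hc : 0 ≤ c) (hf : ∀ x, c * |f x| ≤ b) :
    ENNReal.ofReal c * eLpNorm f ⊤ μ ≤ ENNReal.ofReal b := by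
  rw [← Real.enorm_of_nonneg hc, ← eLpNorm_const_smul, eLpNorm_exponent_top]
  refine eLpNormEssSup_le_of_ae_bound (.of_forall fun x => ?_)
  simpa [abs_of_nonneg hc] using hf x

section NormExpDecay

variable {E : Type*} [NormedAddCommGroup E] [NormedSpace ℝ E] [FiniteDimensional ℝ E]
  [MeasurableSpace E] [BorelSpace E] (μ : Measure E) [μ.IsAddHaarMeasure]

theorem integrable_norm_pow_mul_exp_neg_mul_norm_rpow (a : ℕ) {t p : ℝ} (ht : 0 < t)
    (hp : 0 < p) : Integrable (fun ξ : E => ‖ξ‖ ^ a * exp (-t * ‖ξ‖ ^ p)) μ := by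
  -- polar coordinates (`integrable_fun_norm_addHaar`) need a nontrivial space
  rcases subsingleton_or_nontrivial E with hE | hE
  · have hcont : Continuous fun ξ : E => ‖ξ‖ ^ a * exp (-t * ‖ξ‖ ^ p) := by
      have := continuous_norm.rpow_const (α := E) fun _ => Or.inr hp.le
      fun_prop
    exact hcont.integrable_of_hasCompactSupport (.of_compactSpace _)
  rw [integrable_fun_norm_addHaar μ (f := fun r => r ^ a * exp (-t * r ^ p))]
  refine (integrableOn_rpow_mul_exp_neg_mul_rpow (s := ↑(Module.finrank ℝ E - 1 + a))
    (by linarith [Nat.cast_nonneg (α := ℝ) (Module.finrank ℝ E - 1 + a)]) hp ht).congr_fun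
    (fun r _ => ?_) measurableSet_Ioi
  simp only [rpow_natCast, pow_add, smul_eq_mul, mul_assoc]

theorem integrable_exp_neg_mul_norm_rpow {t p : ℝ} (ht : 0 < t) (hp : 0 < p) :
    Integrable (fun ξ : E => exp (-t * ‖ξ‖ ^ p)) μ := by
  simpa using integrable_norm_pow_mul_exp_neg_mul_norm_rpow μ 0 ht hp

end NormExpDecay

section Convolution

variable {E : Type*} [NormedAddCommGroup E] [MeasurableSpace E] [OpensMeasurableSpace E]
  {μ : Measure E} {u : E → ℝ}

theorem integrable_min_mul_norm_mul_abs (hu : Integrable u μ) {a C : ℝ} (ha : 0 ≤ a)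
    (hC : 0 ≤ C) : Integrable (fun y => min (a * ‖y‖) C * |u y|) μ := by
  refine hu.abs.bdd_mul (c := C) (by fun_prop) (.of_forall fun y => ?_)
  rw [Real.norm_of_nonneg (le_min (by positivity) hC)]
  exact min_le_right _ _

theorem tendsto_integral_min_mul_norm_mul_abs (hu : Integrable u μ) {C : ℝ} (hC : 0 ≤ C) :
    Tendsto (fun a => ∫ y, min (a * ‖y‖) C * |u y| ∂μ) (𝓝[≥] 0) (𝓝 0) := by
  have hlim := tendsto_integral_filter_of_dominated_convergence (fun y => C * |u y|)
    (F := fun a y => min (a * ‖y‖) C * |u y|) (f := fun _ => 0) (l := 𝓝[≥] (0 : ℝ))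
    (.of_forall fun _ => by fun_prop) ?_ (hu.abs.const_mul C) (.of_forall fun y => ?_)
  · simpa using hlim
  · filter_upwards [self_mem_nhdsWithin] with a (ha : 0 ≤ a)
    refine .of_forall fun y => ?_
    rw [norm_mul, Real.norm_of_nonneg (le_min (by positivity) hC), norm_abs_eq_norm,
      Real.norm_eq_abs]
    exact mul_le_mul_of_nonneg_right (min_le_right _ _) (abs_nonneg _)
  · have : Tendsto (fun a : ℝ => min (a * ‖y‖) C) (𝓝[≥] 0) (𝓝 (min (0 * ‖y‖) C)) :=
      ((continuous_mul_const ‖y‖).min continuous_const).continuousWithinAt.tendsto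
    simpa [min_eq_left hC] using this.mul_const |u y|

theorem abs_integral_comp_sub_mul_sub_le {g : E → ℝ} (hg : Continuous g) {ω : ℝ → ℝ}
    (hω : ∀ a b, |g a - g b| ≤ ω ‖a - b‖) (hu : Integrable u μ)
    (hωu : Integrable (fun y => ω ‖y‖ * |u y|) μ) (x : E) :
    |∫ y, g (x - y) * u y ∂μ - (∫ y, u y ∂μ) * g x| ≤ ∫ y, ω ‖y‖ * |u y| ∂μ := by
  have hbound : ∀ y, ‖g (x - y) * u y - u y * g x‖ ≤ ω ‖y‖ * |u y| := fun y => by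
    rw [mul_comm (u y), ← sub_mul, norm_mul, Real.norm_eq_abs, Real.norm_eq_abs]
    simpa using mul_le_mul_of_nonneg_right (hω (x - y) x) (abs_nonneg (u y))
  have hconv : Integrable (fun y => g (x - y) * u y) μ := by
    refine ((hωu.mono' ?_ (.of_forall hbound)).add (hu.mul_const (g x))).congr
      (.of_forall fun y => by simp)
    exact ((hg.comp (continuous_const.sub continuous_id)).aestronglyMeasurable.mul
      hu.aestronglyMeasurable).sub (hu.mul_const _).aestronglyMeasurable
  rw [← integral_mul_const, ← integral_sub hconv (hu.mul_const _), ← Real.norm_eq_abs]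
  exact norm_integral_le_of_norm_le hωu (.of_forall hbound)

end Convolution

section Kernel

variable {n : ℕ} {s t : ℝ}

noncomputable def fracPIntegrand (n : ℕ) (s : ℝ) (x : EuclideanSpace ℝ (Fin n)) (t : ℝ)
    (ξ : EuclideanSpace ℝ (Fin n)) : ℂ :=
  Complex.exp (Complex.I * ((inner ℝ x ξ : ℝ) : ℂ)) *
    Complex.exp (-(t : ℂ) * ((‖ξ‖ ^ (2 * s) : ℝ) : ℂ))

noncomputable def fracPSupBound (n : ℕ) (s t : ℝ) : ℝ :=
  ((2 * π) ^ n)⁻¹ * ∫ ξ : EuclideanSpace ℝ (Fin n), exp (-t * ‖ξ‖ ^ (2 * s))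

noncomputable def fracPLipschitzConst (n : ℕ) (s t : ℝ) : ℝ :=
  ((2 * π) ^ n)⁻¹ * ∫ ξ : EuclideanSpace ℝ (Fin n), ‖ξ‖ * exp (-t * ‖ξ‖ ^ (2 * s))

theorem fracPSupBound_nonneg : 0 ≤ fracPSupBound n s t :=
  mul_nonneg (by positivity) (integral_nonneg fun _ => by positivity)

theorem fracPLipschitzConst_nonneg : 0 ≤ fracPLipschitzConst n s t :=
  mul_nonneg (by positivity) (integral_nonneg fun _ => by positivity)

theorem fracP_eq_re_integral (x : EuclideanSpace ℝ (Fin n)) (t : ℝ) :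
    fracP n s x t = ((2 * π) ^ n)⁻¹ * (∫ ξ, fracPIntegrand n s x t ξ).re :=
  rfl

theorem norm_fracPIntegrand (x ξ : EuclideanSpace ℝ (Fin n)) :
    ‖fracPIntegrand n s x t ξ‖ = exp (-t * ‖ξ‖ ^ (2 * s)) := by
  simp [fracPIntegrand, Complex.norm_exp]

theorem norm_fracPIntegrand_sub_le (x y ξ : EuclideanSpace ℝ (Fin n)) :
    ‖fracPIntegrand n s x t ξ - fracPIntegrand n s y t ξ‖ ≤
      ‖x - y‖ * (‖ξ‖ * exp (-t * ‖ξ‖ ^ (2 * s))) := by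
  rw [fracPIntegrand, fracPIntegrand, ← sub_mul, norm_mul, ← mul_assoc]
  refine mul_le_mul ?_ (by simp [Complex.norm_exp]) (norm_nonneg _) (by positivity)
  refine (norm_cexp_I_mul_sub_cexp_I_mul_le _ _).trans ?_
  rw [← inner_sub_left]
  exact abs_real_inner_le_norm _ _

theorem continuous_fracPIntegrand (hs : 0 < s) (x : EuclideanSpace ℝ (Fin n)) :
    Continuous (fracPIntegrand n s x t) := by
  have := continuous_norm.rpow_const (α := EuclideanSpace ℝ (Fin n)) (p := 2 * s)
    fun _ => Or.inr (by positivity)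
  unfold fracPIntegrand
  fun_prop

theorem integrable_fracPIntegrand (hs : 0 < s) (ht : 0 < t) (x : EuclideanSpace ℝ (Fin n)) :
    Integrable (fracPIntegrand n s x t) :=
  (integrable_exp_neg_mul_norm_rpow volume ht (by positivity)).mono'
    (continuous_fracPIntegrand hs x).aestronglyMeasurable
    (.of_forall fun ξ => (norm_fracPIntegrand x ξ).le)

theorem abs_fracP_le (hs : 0 < s) (ht : 0 < t) (x : EuclideanSpace ℝ (Fin n)) :
    |fracP n s x t| ≤ fracPSupBound n s t := by
  rw [fracP_eq_re_integral, fracPSupBound, abs_mul, abs_of_pos (by positivity)]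
  gcongr
  exact (Complex.abs_re_le_norm _).trans (norm_integral_le_of_norm_le
    (integrable_exp_neg_mul_norm_rpow volume ht (by positivity))
    (.of_forall fun ξ => (norm_fracPIntegrand x ξ).le))

theorem lipschitzWith_fracP (hs : 0 < s) (ht : 0 < t) :
    LipschitzWith (fracPLipschitzConst n s t).toNNReal (fracP n s · t) := by
  refine LipschitzWith.of_dist_le' fun x y => ?_
  rw [Real.dist_eq, dist_eq_norm, fracP_eq_re_integral, fracP_eq_re_integral, ← mul_sub,
    fracPLipschitzConst, abs_mul, abs_of_pos (by positivity), mul_assoc, ← Complex.sub_re,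
    ← integral_sub (integrable_fracPIntegrand hs ht x) (integrable_fracPIntegrand hs ht y)]
  have hint : Integrable fun ξ : EuclideanSpace ℝ (Fin n) => ‖ξ‖ * exp (-t * ‖ξ‖ ^ (2 * s)) := by
    simpa using integrable_norm_pow_mul_exp_neg_mul_norm_rpow volume 1 ht (by positivity)
  gcongr
  calc _ ≤ ‖∫ ξ, (fracPIntegrand n s x t ξ - fracPIntegrand n s y t ξ)‖ :=
        Complex.abs_re_le_norm _
    _ ≤ ∫ ξ, ‖x - y‖ * (‖ξ‖ * exp (-t * ‖ξ‖ ^ (2 * s))) :=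
      norm_integral_le_of_norm_le (hint.const_mul _) (.of_forall (norm_fracPIntegrand_sub_le x y))
    _ = _ := by rw [integral_const_mul, mul_comm]

theorem fracPIntegrand_smul {c : ℝ} (hc : 0 < c) (x ξ : EuclideanSpace ℝ (Fin n)) :
    fracPIntegrand n s x t (c • ξ) = fracPIntegrand n s (c • x) (c ^ (2 * s) * t) ξ := by
  simp only [fracPIntegrand, real_inner_smul_left, real_inner_smul_right, norm_smul,
    Real.norm_of_nonneg hc.le, Real.mul_rpow hc.le (norm_nonneg _)]
  push_cast
  ring_nf

theorem fracP_smul_rpow_mul {c : ℝ} (hc : 0 < c) (x : EuclideanSpace ℝ (Fin n)) (t : ℝ) :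
    fracP n s (c • x) (c ^ (2 * s) * t) = (c ^ n)⁻¹ * fracP n s x t := by
  have h := Measure.integral_comp_smul_of_nonneg volume (fracPIntegrand n s x t) c (hR := hc.le)
  simp only [fracPIntegrand_smul hc, finrank_euclideanSpace_fin] at h
  rw [fracP_eq_re_integral, fracP_eq_re_integral, h, Complex.real_smul, Complex.re_ofReal_mul]
  ring

theorem rpow_mul_fracP (hs : 0 < s) (ht : 0 < t) (x : EuclideanSpace ℝ (Fin n)) :
    t ^ ((n : ℝ) / (2 * s)) * fracP n s x t = fracP n s (t ^ (-1 / (2 * s)) • x) 1 := by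
  set c := t ^ (-1 / (2 * s))
  have hc : 0 < c := rpow_pos_of_pos ht _
  have hct : c ^ (2 * s) * t = 1 := by
    rw [← rpow_mul ht.le, div_mul_cancel₀ _ (by positivity), rpow_neg_one, inv_mul_cancel₀ ht.ne']
  rw [← hct, fracP_smul_rpow_mul hc, ← rpow_natCast, ← rpow_mul ht.le, ← rpow_neg ht.le]
  congr 2
  field_simp

theorem abs_rpow_mul_fracP_sub_le (hs : 0 < s) (ht : 0 < t) (z w : EuclideanSpace ℝ (Fin n)) :
    |t ^ ((n : ℝ) / (2 * s)) * fracP n s z t - t ^ ((n : ℝ) / (2 * s)) * fracP n s w t| ≤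
      min (fracPLipschitzConst n s 1 * t ^ (-1 / (2 * s)) * ‖z - w‖) (2 * fracPSupBound n s 1) := by
  set c := t ^ (-1 / (2 * s))
  have hc : 0 < c := rpow_pos_of_pos ht _
  rw [rpow_mul_fracP hs ht, rpow_mul_fracP hs ht, mul_assoc, ← dist_eq_norm,
    show c * dist z w = dist (c • z) (c • w) by rw [dist_smul₀, Real.norm_of_nonneg hc.le],
    ← Real.coe_toNNReal _ fracPLipschitzConst_nonneg]
  exact abs_sub_le_min_of_lipschitzWith (lipschitzWith_fracP hs one_pos) (abs_fracP_le hs one_pos)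
    _ _

theorem rpow_mul_abs_fracSol_sub_le (hs : 0 < s) {u₀ : EuclideanSpace ℝ (Fin n) → ℝ}
    (hu₀ : Integrable u₀) (ht : 0 < t) (x : EuclideanSpace ℝ (Fin n)) :
    t ^ ((n : ℝ) / (2 * s)) * |fracSol n s u₀ x t - (∫ y, u₀ y) * fracP n s x t| ≤
      ∫ y, min (fracPLipschitzConst n s 1 * t ^ (-1 / (2 * s)) * ‖y‖)
        (2 * fracPSupBound n s 1) * |u₀ y| := by
  set c := t ^ ((n : ℝ) / (2 * s))
  have hc : 0 ≤ c := rpow_nonneg ht.le _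
  have hconv : ∫ y, c * fracP n s (x - y) t * u₀ y = c * fracSol n s u₀ x t := by
    simp_rw [mul_assoc]
    exact integral_const_mul c _
  calc c * |fracSol n s u₀ x t - (∫ y, u₀ y) * fracP n s x t|
      = |(∫ y, c * fracP n s (x - y) t * u₀ y) - (∫ y, u₀ y) * (c * fracP n s x t)| := by
        rw [hconv, mul_left_comm _ c, ← mul_sub, abs_mul, abs_of_nonneg hc]
    _ ≤ _ := abs_integral_comp_sub_mul_sub_le
        (ω := fun r => min (fracPLipschitzConst n s 1 * t ^ (-1 / (2 * s)) * r)
          (2 * fracPSupBound n s 1))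
        ((lipschitzWith_fracP hs ht).continuous.const_mul c) (abs_rpow_mul_fracP_sub_le hs ht) hu₀
        (integrable_min_mul_norm_mul_abs hu₀
          (mul_nonneg fracPLipschitzConst_nonneg (rpow_nonneg ht.le _))
          (mul_nonneg zero_le_two fracPSupBound_nonneg)) x

end Kernel

theorem fracHeat_Linfty_convergence_to_fundamental_general
    (n : ℕ) (s : ℝ) (hs : s ∈ Set.Ioo (0:ℝ) 1)
    (u₀ : EuclideanSpace ℝ (Fin n) → ℝ) (hu₀ : Integrable u₀)
    (M : ℝ) (hM : M = ∫ x, u₀ x) :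
    Tendsto (fun t : ℝ => ENNReal.ofReal (t ^ ((n : ℝ) / (2 * s))) *
        eLpNorm (fun x => fracSol n s u₀ x t - M * fracP n s x t) ⊤ volume)
      atTop (nhds 0) := by
  have hs0 : 0 < s := hs.1
  have hscale : Tendsto (fun t : ℝ => fracPLipschitzConst n s 1 * t ^ (-1 / (2 * s))) atTop
      (𝓝[≥] 0) := by
    refine tendsto_nhdsWithin_iff.2 ⟨?_, (eventually_gt_atTop 0).mono fun t ht =>
      mul_nonneg fracPLipschitzConst_nonneg (rpow_nonneg ht.le _)⟩
    simpa [neg_div] using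
      (tendsto_rpow_neg_atTop (y := 1 / (2 * s)) (by positivity)).const_mul _
  have hbound := ENNReal.tendsto_ofReal ((tendsto_integral_min_mul_norm_mul_abs hu₀
    (mul_nonneg zero_le_two (fracPSupBound_nonneg (n := n) (s := s) (t := 1)))).comp hscale)
  rw [ENNReal.ofReal_zero] at hbound
  refine tendsto_of_tendsto_of_tendsto_of_le_of_le' tendsto_const_nhds hbound
    (.of_forall fun _ => zero_le) ?_
  filter_upwards [eventually_gt_atTop 0] with t ht
  exact ofReal_mul_eLpNorm_top_le (rpow_nonneg ht.le _) fun x =>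
    hM ▸ rpow_mul_abs_fracSol_sub_le hs0 hu₀ ht x

theorem fracHeat_Linfty_convergence_to_fundamental
    (n : ℕ) (hn : 1 ≤ n) (s : ℝ) (hs : s ∈ Set.Ioo (0:ℝ) 1)
    (u₀ : EuclideanSpace ℝ (Fin n) → ℝ) (hu₀ : Integrable u₀)
    (M : ℝ) (hM : M = ∫ x, u₀ x) :
    Tendsto (fun t : ℝ => ENNReal.ofReal (t ^ ((n : ℝ) / (2 * s))) *
        eLpNorm (fun x => fracSol n s u₀ x t - M * fracP n s x t) ⊤ volume)
      atTop (nhds 0) :=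
  fracHeat_Linfty_convergence_to_fundamental_general n s hs u₀ hu₀ M hM
end

section
/- Let n ≥ 1, s ∈ (0,1), and fix h ≠ 0. Consider the solution u(x,t) = P(x + h e₁, t; s), i.e. the fractional heat kernel displaced by h in the first coordinate direction. Then the convergence rate of Theorem on solutions with finite first moment is attained exactly: there exist constants c, C, T > 0 (depending on n, s, h) such that for all t ≥ T, c·t^{−1/(2s)} ≤ t^{n/(2s)} ‖u(·,t) − P(·,t;s)‖_{L^∞(ℝⁿ)} ≤ C·t^{−1/(2s)}. -/
open MeasureTheory Real Filter

/-!
Self-similarity of the kernel, `P(x, t) = t^(-n/(2s)) Φ(t^(-1/(2s)) x)` with `Φ = P(·, 1)`, turns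
`t^(n/(2s)) ‖P(· + h e₁, t) - P(·, t)‖_∞` into `‖Φ(· + v) - Φ‖_∞` for `v = t^(-1/(2s)) h e₁`,
so both bounds say that this sup norm is comparable to `‖v‖` for small `v`. The profile `Φ` is
`(2π)^(-n)` times the cosine transform of `exp(-|ξ|^(2s))`. That weight has a finite first moment,
so `Φ` is Lipschitz, which is the upper bound. For the lower bound, `Φ(0) > 0` while `Φ` vanishes
at infinity (Riemann–Lebesgue): if `N ‖v‖` just exceeds the radius beyond which `|Φ| < Φ(0) / 2`,
the values `Φ(0), Φ(v), …, Φ(N v)` drop by at least `Φ(0) / 2`, so one of the `N ≲ 1 / ‖v‖`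
steps drops by `≳ ‖v‖`.
-/

section Generic

variable {E : Type*} [NormedAddCommGroup E]

theorem integrable_norm_pow_mul_exp_neg_mul_rpow [NormedSpace ℝ E] [FiniteDimensional ℝ E]
    [MeasurableSpace E] [BorelSpace E] (μ : Measure E) [μ.IsAddHaarMeasure] (k : ℕ) {b p : ℝ}
    (hb : 0 < b) (hp : 0 < p) :
    Integrable (fun x => ‖x‖ ^ k * rexp (-(b * ‖x‖ ^ p))) μ := by
  rcases subsingleton_or_nontrivial E with hE | hE
  · exact Integrable.of_finite
  rw [integrable_fun_norm_addHaar μ (f := fun r => r ^ k * rexp (-(b * r ^ p)))]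
  refine (integrableOn_rpow_mul_exp_neg_mul_rpow (s := ((Module.finrank ℝ E - 1 + k : ℕ) : ℝ))
    (neg_one_lt_zero.trans_le (Nat.cast_nonneg _)) hp hb).congr_fun (fun r _ => ?_)
    measurableSet_Ioi
  simp only [rpow_natCast, pow_add, smul_eq_mul, neg_mul]
  ring

theorem eLpNorm_top_comp_smul [NormedSpace ℝ E] [FiniteDimensional ℝ E] [MeasurableSpace E]
    [BorelSpace E] (μ : Measure E) [μ.IsAddHaarMeasure] {F : Type*} [NormedAddCommGroup F]
    (g : E → F) {R : ℝ} (hR : R ≠ 0) :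
    eLpNorm (fun x => g (R • x)) ⊤ μ = eLpNorm g ⊤ μ := by
  have := (measurableEmbedding_const_smul₀ (α := E) hR).eLpNorm_map_measure (g := g) (μ := μ)
    (p := ⊤)
  rw [Measure.map_addHaar_smul μ hR, eLpNorm_smul_measure_of_ne_zero (by simp [hR])] at this
  simpa [Function.comp_def] using this.symm

theorem enorm_le_eLpNorm_top_of_continuous {X F : Type*} [TopologicalSpace X] [MeasurableSpace X]
    (μ : Measure X) [μ.IsOpenPosMeasure] [NormedAddCommGroup F] {f : X → F} (hf : Continuous f)
    (x : X) : ‖f x‖ₑ ≤ eLpNorm f ⊤ μ := by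
  have hclosed : IsClosed {y | ‖f y‖ₑ ≤ eLpNormEssSup f μ} :=
    isClosed_le hf.enorm continuous_const
  have hdense := μ.dense_of_ae (ae_le_eLpNormEssSup (f := f))
  rw [eLpNorm_exponent_top]
  exact hclosed.closure_subset (hdense.closure_eq ▸ Set.mem_univ x)

theorem LipschitzWith.eLpNorm_top_add_sub_le {F : Type*} [NormedAddCommGroup F]
    [MeasurableSpace E] (μ : Measure E) {K : NNReal} {f : E → F} (hf : LipschitzWith K f)
    (v : E) :
    eLpNorm (fun x => f (x + v) - f x) ⊤ μ ≤ ENNReal.ofReal (K * ‖v‖) := by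
  rw [eLpNorm_exponent_top]
  refine eLpNormEssSup_le_of_ae_bound (ae_of_all _ fun x => ?_)
  simpa [dist_eq_norm] using hf.dist_le_mul (x + v) x

theorem exists_div_le_abs_sub_succ (G : ℕ → ℝ) {N : ℕ} (hN : 0 < N) :
    ∃ k < N, |G N - G 0| / N ≤ |G (k + 1) - G k| := by
  have hsum : ∑ _k ∈ Finset.range N, |G N - G 0| / N ≤
      ∑ k ∈ Finset.range N, |G (k + 1) - G k| := by
    rw [Finset.sum_const, Finset.card_range, nsmul_eq_mul, mul_div_cancel₀ _ (by positivity),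
      ← Finset.sum_range_sub]
    exact Finset.abs_sum_le_sum_abs _ _
  obtain ⟨k, hk, hle⟩ := Finset.exists_le_of_sum_le (Finset.nonempty_range_iff.2 hN.ne') hsum
  exact ⟨k, Finset.mem_range.1 hk, hle⟩

theorem mul_rpow_neg_one_div_le_one {a p t : ℝ} (ha : 0 < a) (hp : 0 < p) (ht : a ^ p ≤ t) :
    a * t ^ (-1 / p) ≤ 1 := by
  have hdecay : t ^ (-1 / p) ≤ (a ^ p) ^ (-1 / p) :=
    rpow_le_rpow_of_nonpos (by positivity) ht (div_nonpos_of_nonpos_of_nonneg (by norm_num) hp.le)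
  rw [← rpow_mul ha.le, mul_div_cancel₀ _ hp.ne', rpow_neg_one] at hdecay
  rwa [← le_div_iff₀' ha, one_div]

theorem exists_nat_pos_lt_mul_le_add {D a : ℝ} (hD : 0 ≤ D) (ha : 0 < a) :
    ∃ N : ℕ, 0 < N ∧ D < N * a ∧ N * a ≤ D + a := by
  refine ⟨⌊D / a⌋₊ + 1, Nat.succ_pos _, ?_, ?_⟩
  · have := Nat.lt_floor_add_one (D / a)
    rw [div_lt_iff₀ ha] at this
    exact_mod_cast this
  · have := Nat.floor_le (div_nonneg hD ha.le)
    rw [le_div_iff₀ ha] at this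
    push_cast
    linarith

theorem exists_pos_mul_norm_le_abs_add_sub [NormedSpace ℝ E] {f : E → ℝ}
    (hf : Tendsto f (Bornology.cobounded E) (nhds 0)) {x₀ : E} (hx₀ : f x₀ ≠ 0) :
    ∃ c > 0, ∀ v : E, ‖v‖ ≤ 1 → ∃ x, c * ‖v‖ ≤ |f (x + v) - f x| := by
  set κ := |f x₀|
  have hκ : 0 < κ := abs_pos.2 hx₀
  have hsmall : ∀ᶠ y in Bornology.cobounded E, |f y| < κ / 2 := by
    have := (continuous_abs.tendsto (0 : ℝ)).comp hf
    rw [abs_zero] at this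
    exact this.eventually (gt_mem_nhds (half_pos hκ))
  obtain ⟨r, -, hr⟩ := hasBasis_cobounded_norm.eventually_iff.1 hsmall
  set D := |r| + ‖x₀‖ with hD_def
  have hD : 0 ≤ D := by positivity
  refine ⟨κ / (2 * (D + 1)), by positivity, fun v hv => ?_⟩
  rcases eq_or_ne v 0 with rfl | hv0
  · exact ⟨x₀, by simp⟩
  have hvpos : 0 < ‖v‖ := norm_pos_iff.2 hv0
  -- `N` steps of size `v` lead from `x₀` to where `|f| < κ / 2`.
  obtain ⟨N, hN, hN_far, hN_near⟩ := exists_nat_pos_lt_mul_le_add hD hvpos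
  have hfar : |f (x₀ + (N : ℝ) • v)| < κ / 2 := by
    refine hr (show r ≤ ‖x₀ + (N : ℝ) • v‖ from ?_)
    have := norm_sub_le (x₀ + (N : ℝ) • v) x₀
    rw [add_sub_cancel_left, norm_smul, Real.norm_natCast] at this
    linarith [le_abs_self r]
  obtain ⟨k, -, hk⟩ := exists_div_le_abs_sub_succ (fun k : ℕ => f (x₀ + (k : ℝ) • v)) hN
  refine ⟨x₀ + (k : ℝ) • v, ?_⟩
  have hstep : x₀ + ((k + 1 : ℕ) : ℝ) • v = x₀ + (k : ℝ) • v + v := by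
    rw [Nat.cast_succ, add_smul, one_smul, add_assoc]
  have hgap : κ / 2 ≤ |f (x₀ + (N : ℝ) • v) - f x₀| := by
    have := abs_sub_abs_le_abs_sub (f x₀) (f (x₀ + (N : ℝ) • v))
    rw [abs_sub_comm]
    linarith
  simp only [hstep, Nat.cast_zero, zero_smul, add_zero] at hk
  calc κ / (2 * (D + 1)) * ‖v‖ ≤ κ / 2 / N := by
        rw [div_mul_eq_mul_div, div_div, div_le_div_iff₀ (by positivity) (by positivity)]
        nlinarith [hN_near, hv]
    _ ≤ |f (x₀ + (N : ℝ) • v) - f x₀| / N := by gcongr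
    _ ≤ _ := hk

theorem exists_pos_mul_norm_le_eLpNorm_top_add_sub [NormedSpace ℝ E] [MeasurableSpace E]
    (μ : Measure E) [μ.IsOpenPosMeasure] {f : E → ℝ} (hcont : Continuous f)
    (hf : Tendsto f (Bornology.cobounded E) (nhds 0)) {x₀ : E} (hx₀ : f x₀ ≠ 0) :
    ∃ c > 0, ∀ v : E, ‖v‖ ≤ 1 →
      ENNReal.ofReal (c * ‖v‖) ≤ eLpNorm (fun x => f (x + v) - f x) ⊤ μ := by
  obtain ⟨c, hc, hpoint⟩ := exists_pos_mul_norm_le_abs_add_sub hf hx₀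
  refine ⟨c, hc, fun v hv => ?_⟩
  obtain ⟨x, hx⟩ := hpoint v hv
  calc ENNReal.ofReal (c * ‖v‖) ≤ ‖f (x + v) - f x‖ₑ := by
        rw [Real.enorm_eq_ofReal_abs]
        exact ENNReal.ofReal_le_ofReal hx
    _ ≤ _ := enorm_le_eLpNorm_top_of_continuous μ
        ((hcont.comp (continuous_add_const v)).sub hcont) x

end Generic

section CosineTransform

variable {V : Type*} [NormedAddCommGroup V] [InnerProductSpace ℝ V] [FiniteDimensional ℝ V]
  [MeasurableSpace V] [BorelSpace V]

noncomputable def cosineTransform (g : V → ℝ) (x : V) : ℝ :=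
  ∫ ξ, cos (inner ℝ x ξ) * g ξ

theorem cosineTransform_zero (g : V → ℝ) : cosineTransform g 0 = ∫ ξ, g ξ := by
  simp [cosineTransform]

theorem integrable_cos_inner_mul {g : V → ℝ} (hg : Integrable g) (x : V) :
    Integrable (fun ξ => cos (inner ℝ x ξ) * g ξ) :=
  hg.bdd_mul (by fun_prop) (ae_of_all _ fun ξ => abs_cos_le_one _)

theorem lipschitzWith_cosineTransform {g : V → ℝ} (hg : Integrable g)
    (hg' : Integrable fun ξ => ‖ξ‖ * g ξ) :
    LipschitzWith (∫ ξ, ‖ξ‖ * |g ξ|).toNNReal (cosineTransform g) := by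
  refine LipschitzWith.of_dist_le' fun x y => ?_
  rw [dist_eq_norm, dist_eq_norm, cosineTransform, cosineTransform,
    ← integral_sub (integrable_cos_inner_mul hg x) (integrable_cos_inner_mul hg y),
    ← integral_mul_const]
  have hbound : Integrable fun ξ => ‖ξ‖ * |g ξ| := by simpa [abs_mul] using hg'.norm
  refine norm_integral_le_of_norm_le (hbound.mul_const _) (ae_of_all _ fun ξ => ?_)
  have hcos : |cos (inner ℝ x ξ) - cos (inner ℝ y ξ)| ≤ ‖ξ‖ * ‖x - y‖ := by
    refine (abs_cos_sub_cos_le _ _).trans ?_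
    rw [← inner_sub_left, mul_comm]
    exact abs_real_inner_le_norm _ _
  rw [← sub_mul, norm_mul, Real.norm_eq_abs, Real.norm_eq_abs, mul_right_comm]
  exact mul_le_mul_of_nonneg_right hcos (abs_nonneg _)

theorem cosineTransform_comp_smul (g : V → ℝ) {R : ℝ} (hR : 0 < R) (x : V) :
    cosineTransform (fun ξ => g (R • ξ)) x =
      (R ^ Module.finrank ℝ V)⁻¹ * cosineTransform g (R⁻¹ • x) := by
  have hsubst := Measure.integral_comp_smul_of_nonneg volume
    (fun η => cos (inner ℝ x (R⁻¹ • η)) * g η) R (hR := hR.le)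
  simp only [smul_smul, inv_mul_cancel₀ hR.ne', one_smul, smul_eq_mul] at hsubst
  simp only [cosineTransform, hsubst, real_inner_smul_left, real_inner_smul_right]

theorem tendsto_cosineTransform_cocompact {g : V → ℝ} (hg : Integrable g) :
    Tendsto (cosineTransform g) (cocompact V) (nhds 0) := by
  have hRL := tendsto_integral_exp_inner_smul_cocompact (fun ξ : V => (g ξ : ℂ))
  have hscale : Tendsto (fun x : V => (2 * π)⁻¹ • x) (cocompact V) (cocompact V) :=
    (Homeomorph.smulOfNeZero _ (by positivity)).map_cocompact.le
  have hre := ((Complex.continuous_re.tendsto 0).comp hRL).comp hscale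
  rw [Complex.zero_re] at hre
  refine hre.congr fun x => ?_
  simp only [Function.comp_apply]
  have hint := (Real.fourierIntegral_convergent_iff ((2 * π)⁻¹ • x)).2
    (hg.ofReal (𝕜 := ℂ))
  have hre_comm := integral_re (𝕜 := ℂ) hint
  simp only [RCLike.re_to_complex] at hre_comm
  refine hre_comm.symm.trans (integral_congr_ae (ae_of_all _ fun ξ => ?_))
  dsimp only
  rw [Circle.smul_def, Real.fourierChar_apply, smul_eq_mul, real_inner_smul_right,
    real_inner_comm, mul_neg, mul_inv_cancel_left₀ (by positivity)]
  simp [Complex.mul_re, Complex.exp_re]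

end CosineTransform

section FractionalHeatKernel

variable {n : ℕ} {s t : ℝ}

theorem integrable_exp_neg_mul_norm_rpow_s5 (hs : 0 < s) (ht : 0 < t) :
    Integrable fun ξ : EuclideanSpace ℝ (Fin n) => rexp (-(t * ‖ξ‖ ^ (2 * s))) := by
  simpa using integrable_norm_pow_mul_exp_neg_mul_rpow volume 0 ht (by positivity : 0 < 2 * s)

theorem fracP_eq_cosineTransform (hs : 0 < s) (ht : 0 < t) (x : EuclideanSpace ℝ (Fin n)) :
    fracP n s x t =
      ((2 * π) ^ n)⁻¹ * cosineTransform (fun ξ => rexp (-(t * ‖ξ‖ ^ (2 * s)))) x := by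
  have hexp : ∀ ξ : EuclideanSpace ℝ (Fin n),
      Complex.exp (-(t : ℂ) * ((‖ξ‖ ^ (2 * s) : ℝ) : ℂ)) =
        (rexp (-(t * ‖ξ‖ ^ (2 * s))) : ℂ) := by
    intro ξ
    push_cast
    ring_nf
  have hint : Integrable fun ξ : EuclideanSpace ℝ (Fin n) =>
      Complex.exp (Complex.I * ((inner ℝ x ξ : ℝ) : ℂ)) *
        Complex.exp (-(t : ℂ) * ((‖ξ‖ ^ (2 * s) : ℝ) : ℂ)) := by
    simp only [hexp]
    refine (integrable_exp_neg_mul_norm_rpow_s5 hs ht).ofReal.bdd_mul (c := 1) (by fun_prop) ?_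
    refine ae_of_all _ fun ξ => ?_
    rw [mul_comm, Complex.norm_exp_ofReal_mul_I]
  rw [fracP, ← Complex.reCLM_apply, ← ContinuousLinearMap.integral_comp_comm _ hint]
  congr 1
  refine integral_congr_ae (ae_of_all _ fun ξ => ?_)
  simp only [Complex.reCLM_apply, hexp, Complex.re_mul_ofReal, mul_comm Complex.I,
    Complex.exp_ofReal_mul_I_re]

theorem fracP_eq_rpow_mul_fracP_one (hs : 0 < s) (ht : 0 < t) (x : EuclideanSpace ℝ (Fin n)) :
    fracP n s x t = t ^ (-(n : ℝ) / (2 * s)) * fracP n s (t ^ (-1 / (2 * s)) • x) 1 := by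
  set R := t ^ (1 / (2 * s)) with hR_def
  have hR : 0 < R := rpow_pos_of_pos ht _
  have hprofile : (fun ξ : EuclideanSpace ℝ (Fin n) => rexp (-(t * ‖ξ‖ ^ (2 * s)))) =
      fun ξ => rexp (-(1 * ‖R • ξ‖ ^ (2 * s))) := by
    funext ξ
    rw [norm_smul, Real.norm_of_nonneg hR.le, mul_rpow hR.le (norm_nonneg _), hR_def,
      ← rpow_mul ht.le, one_div_mul_cancel (by positivity), rpow_one, one_mul]
  have hRinv : R⁻¹ = t ^ (-1 / (2 * s)) := by
    rw [hR_def, ← rpow_neg ht.le, neg_div]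
  have hRpow : (R ^ n)⁻¹ = t ^ (-(n : ℝ) / (2 * s)) := by
    rw [hR_def, ← rpow_natCast, ← rpow_mul ht.le, ← rpow_neg ht.le]
    ring_nf
  rw [fracP_eq_cosineTransform hs ht, fracP_eq_cosineTransform hs one_pos, hprofile,
    cosineTransform_comp_smul (fun ξ => rexp (-(1 * ‖ξ‖ ^ (2 * s)))) hR,
    finrank_euclideanSpace_fin, hRinv, hRpow]
  ring

theorem fracP_one_eq_cosineTransform (hs : 0 < s) :
    (fun x => fracP n s x 1) = fun x =>
      ((2 * π) ^ n)⁻¹ * cosineTransform (fun ξ => rexp (-(1 * ‖ξ‖ ^ (2 * s)))) x :=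
  funext (fracP_eq_cosineTransform hs one_pos)

theorem exists_lipschitzWith_fracP_one (hs : 0 < s) :
    ∃ K, LipschitzWith K fun x : EuclideanSpace ℝ (Fin n) => fracP n s x 1 := by
  have hmoment := integrable_norm_pow_mul_exp_neg_mul_rpow (E := EuclideanSpace ℝ (Fin n))
    volume 1 one_pos (by positivity : 0 < 2 * s)
  simp only [pow_one] at hmoment
  rw [fracP_one_eq_cosineTransform hs]
  exact ⟨_, (lipschitzWith_smul (((2 * π) ^ n)⁻¹ : ℝ)).comp
    (lipschitzWith_cosineTransform (integrable_exp_neg_mul_norm_rpow_s5 hs one_pos) hmoment)⟩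

theorem tendsto_fracP_one_cocompact (hs : 0 < s) :
    Tendsto (fun x : EuclideanSpace ℝ (Fin n) => fracP n s x 1) (cocompact _) (nhds 0) := by
  rw [fracP_one_eq_cosineTransform hs, ← mul_zero ((2 * π) ^ n)⁻¹]
  exact (tendsto_cosineTransform_cocompact
    (integrable_exp_neg_mul_norm_rpow_s5 hs one_pos)).const_mul _

theorem fracP_zero_one_pos (hs : 0 < s) : 0 < fracP n s 0 1 := by
  rw [fracP_eq_cosineTransform hs one_pos, cosineTransform_zero]
  exact mul_pos (by positivity) (integral_exp_pos (integrable_exp_neg_mul_norm_rpow_s5 hs one_pos))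

theorem ofReal_rpow_mul_eLpNorm_fracP_sub (hs : 0 < s) (ht : 0 < t)
    (v : EuclideanSpace ℝ (Fin n)) :
    ENNReal.ofReal (t ^ ((n : ℝ) / (2 * s))) *
        eLpNorm (fun x => fracP n s (x + v) t - fracP n s x t) ⊤ volume =
      eLpNorm (fun x => fracP n s (x + t ^ (-1 / (2 * s)) • v) 1 - fracP n s x 1) ⊤ volume := by
  set R := t ^ (-1 / (2 * s))
  have hR : R ≠ 0 := (rpow_pos_of_pos ht _).ne'
  set Δ := fun y => fracP n s (y + R • v) 1 - fracP n s y 1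
  have hfun : (fun x => fracP n s (x + v) t - fracP n s x t) =
      t ^ (-(n : ℝ) / (2 * s)) • fun x => Δ (R • x) := by
    funext x
    simp only [Δ, Pi.smul_apply, smul_eq_mul, fracP_eq_rpow_mul_fracP_one hs ht, smul_add]
    ring
  rw [hfun, eLpNorm_const_smul, eLpNorm_top_comp_smul volume Δ hR, ← mul_assoc,
    Real.enorm_eq_ofReal_abs, abs_of_pos (rpow_pos_of_pos ht _),
    ← ENNReal.ofReal_mul (rpow_nonneg ht.le _), ← rpow_add ht, ← add_div, add_neg_cancel,
    zero_div, rpow_zero, ENNReal.ofReal_one, one_mul]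

end FractionalHeatKernel

theorem fracHeat_displaced_kernel_optimal_rate
    (n : ℕ) (hn : 1 ≤ n) (s : ℝ) (hs : s ∈ Set.Ioo (0:ℝ) 1) (h : ℝ) (hh : h ≠ 0) :
    ∃ c > (0:ℝ), ∃ C > (0:ℝ), ∃ T > (0:ℝ), ∀ t ≥ T,
      ENNReal.ofReal (c * t ^ (-1 / (2 * s))) ≤
        ENNReal.ofReal (t ^ ((n : ℝ) / (2 * s))) *
          eLpNorm (fun x =>
            fracP n s (x + h • EuclideanSpace.single (⟨0, hn⟩ : Fin n) (1:ℝ)) t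
              - fracP n s x t) ⊤ volume ∧
      ENNReal.ofReal (t ^ ((n : ℝ) / (2 * s))) *
          eLpNorm (fun x =>
            fracP n s (x + h • EuclideanSpace.single (⟨0, hn⟩ : Fin n) (1:ℝ)) t
              - fracP n s x t) ⊤ volume ≤
        ENNReal.ofReal (C * t ^ (-1 / (2 * s))) := by
  obtain ⟨hs, -⟩ := hs
  obtain ⟨K, hK⟩ := exists_lipschitzWith_fracP_one (n := n) hs
  obtain ⟨c, hc, hlower⟩ := exists_pos_mul_norm_le_eLpNorm_top_add_sub volume hK.continuous
    ((tendsto_fracP_one_cocompact hs).mono_left Metric.cobounded_le_cocompact)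
    (fracP_zero_one_pos hs).ne'
  have habs : 0 < |h| := abs_pos.2 hh
  refine ⟨c * |h|, by positivity, (K + 1) * |h|, by positivity, |h| ^ (2 * s), by positivity,
    fun t ht => ?_⟩
  have ht0 : 0 < t := (rpow_pos_of_pos habs _).trans_le ht
  set v := t ^ (-1 / (2 * s)) • h • EuclideanSpace.single (⟨0, hn⟩ : Fin n) (1:ℝ)
  have hv : ‖v‖ = |h| * t ^ (-1 / (2 * s)) := by
    simp [v, norm_smul, abs_of_pos (rpow_pos_of_pos ht0 _), mul_comm]
  have hv_le : ‖v‖ ≤ 1 := hv ▸ mul_rpow_neg_one_div_le_one habs (by positivity) ht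
  rw [ofReal_rpow_mul_eLpNorm_fracP_sub hs ht0]
  refine ⟨?_, ?_⟩
  · calc ENNReal.ofReal (c * |h| * t ^ (-1 / (2 * s))) = ENNReal.ofReal (c * ‖v‖) := by
          rw [hv, mul_assoc]
      _ ≤ _ := hlower v hv_le
  · calc _ ≤ ENNReal.ofReal (K * ‖v‖) := hK.eLpNorm_top_add_sub_le volume v
      _ ≤ ENNReal.ofReal ((K + 1) * |h| * t ^ (-1 / (2 * s))) := by
          rw [hv, mul_assoc]
          gcongr
          linarith
end
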